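/- Let p be a prime, L a field of characteristic p, and f ∈ m ⊂ L[x_1,…,x_n] homogeneous of degree d under an ℕ-grading with deg x_i = w_i, such that λ := (Σ w_i)/d ≤ 1. Suppose fpt(f) = λ, and let g be a polynomial all of whose monomials have degree > d. Then fpt(f+g) = fpt(f). (Upper bound direction: for every e ≥ 1 and every 0 ≤ k ≤ ν_f(p^e)+1, every monomial of f^{ν_f(p^e)+1−k} g^k has degree ≥ p^e·Σ w_i, hence lies in m^{[p^e]}, whence ν_{f+g}(p^e) ≤ ν_f(p^e).) -/

import Mathlib

/-!
Fix `e` and put `N = ν_f(p^e)`. Since `f` is homogeneous of degree `d` and every monomial of `g`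
has degree `> d`, every monomial of `(f + g)^M - f^M` has degree `> M d`. Hence the monomial of
`f^N` that keeps it outside `m^{[p^e]}` survives in `(f + g)^N`. Conversely, Frobenius gives
`fpt(f) ≤ (N + 1)/p^e`, so `fpt(f) = (Σ w_i)/d` forces `p^e Σ w_i ≤ (N + 1) d`; then every
monomial of `(f + g)^{N+1} - f^{N+1}` has degree `> (p^e - 1) Σ w_i`, so it is divisible by some
`x_i^{p^e}`, and `f^{N+1} ∈ m^{[p^e]}` already. Thus `ν_{f+g}(p^e) = ν_f(p^e)` for every `e`.
-/

open MvPolynomial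

/-- The `e`-th truncation of the non-terminating base `p` expansion of `α ∈ (0,1]`:
the unique multiple of `p^{-e}` with `⟨α⟩_e < α ≤ ⟨α⟩_e + p^{-e}`
(with the convention `⟨α⟩_e = 0` for `α ≤ 0`). -/
noncomputable def trunc (p e : ℕ) (α : ℝ) : ℝ :=
  if α ≤ 0 then 0 else (⌈α * (p : ℝ) ^ e⌉ - 1) / (p : ℝ) ^ e

/-- The `e`-th digit (`e ≥ 1`) of the non-terminating base `p` expansion of `α ∈ (0,1]`,
namely `p^e ⟨α⟩_e - p^e ⟨α⟩_{e-1}`. -/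
noncomputable def digit (p e : ℕ) (α : ℝ) : ℤ :=
  (⌈α * (p : ℝ) ^ e⌉ - 1) - p * (⌈α * (p : ℝ) ^ (e - 1)⌉ - 1)

/-- Least positive residue of `m` modulo `b`: the unique `r` with `1 ≤ r ≤ b`, `r ≡ m (mod b)`. -/
def lpr (m b : ℤ) : ℤ := if m % b = 0 then b else m % b

/-- The `e`-th Frobenius power `m^{[p^e]} = (x_1^{p^e}, …, x_n^{p^e})`. -/
noncomputable def frobPow (p n : ℕ) (K : Type*) [Field K] (e : ℕ) :
    Ideal (MvPolynomial (Fin n) K) :=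
  Ideal.span (Set.range fun i => (X i : MvPolynomial (Fin n) K) ^ p ^ e)

/-- `ν_f(p^e) = max { N | f^N ∉ m^{[p^e]} }`. -/
noncomputable def nu (p : ℕ) {n : ℕ} {K : Type*} [Field K]
    (f : MvPolynomial (Fin n) K) (e : ℕ) : ℕ :=
  sSup {N : ℕ | f ^ N ∉ frobPow p n K e}

/-- The F-pure threshold `fpt(f) = lim_e ν_f(p^e)/p^e`; since the sequence is
non-decreasing and bounded, the limit equals the supremum. -/
noncomputable def fpt (p : ℕ) {n : ℕ} {K : Type*} [Field K]
    (f : MvPolynomial (Fin n) K) : ℝ :=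
  ⨆ e : ℕ, (nu p f e : ℝ) / (p : ℝ) ^ e

/-- The maximal ideal `m = (x_1, …, x_n)`. -/
noncomputable def mIdeal (n : ℕ) (K : Type*) [Field K] : Ideal (MvPolynomial (Fin n) K) :=
  Ideal.span (Set.range (X : Fin n → MvPolynomial (Fin n) K))

namespace MvPolynomial

variable {σ R : Type*}

def WeightedOrderGE [CommSemiring R] (w : σ → ℕ) (a : ℕ) (φ : MvPolynomial σ R) : Prop :=
  ∀ u ∈ φ.support, a ≤ Finsupp.weight w u

namespace WeightedOrderGE

variable {w : σ → ℕ} {a b : ℕ}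

section CommSemiring

variable [CommSemiring R] {φ ψ : MvPolynomial σ R}

theorem mono (h : WeightedOrderGE w b φ) (hab : a ≤ b) : WeightedOrderGE w a φ :=
  fun u hu => hab.trans (h u hu)

theorem add (hφ : WeightedOrderGE w a φ) (hψ : WeightedOrderGE w a ψ) :
    WeightedOrderGE w a (φ + ψ) := by
  classical
  intro u hu
  rcases Finset.mem_union.mp (support_add hu) with hu | hu
  exacts [hφ u hu, hψ u hu]

theorem mul (hφ : WeightedOrderGE w a φ) (hψ : WeightedOrderGE w b ψ) :
    WeightedOrderGE w (a + b) (φ * ψ) := by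
  classical
  intro u hu
  obtain ⟨v, hv, t, ht, rfl⟩ := Finset.mem_add.mp (support_mul φ ψ hu)
  rw [map_add]
  exact add_le_add (hφ v hv) (hψ t ht)

theorem one : WeightedOrderGE w 0 (1 : MvPolynomial σ R) :=
  fun _ _ => Nat.zero_le _

theorem pow (hφ : WeightedOrderGE w a φ) (k : ℕ) : WeightedOrderGE w (k * a) (φ ^ k) := by
  induction k with
  | zero => simpa using one
  | succ k ih => simpa [pow_succ, Nat.succ_mul] using ih.mul hφ

end CommSemiring

theorem add_pow_sub_pow [CommRing R] {f g : MvPolynomial σ R} {d : ℕ}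
    (hf : WeightedOrderGE w d f) (hg : WeightedOrderGE w (d + 1) g) (N : ℕ) :
    WeightedOrderGE w (N * d + 1) ((f + g) ^ N - f ^ N) := by
  induction N with
  | zero => simp [WeightedOrderGE]
  | succ N ih =>
    have hfg : WeightedOrderGE w d (f + g) := hf.add (hg.mono d.le_succ)
    rw [show (f + g) ^ (N + 1) - f ^ (N + 1) = (f + g) * ((f + g) ^ N - f ^ N) + g * f ^ N by ring]
    exact ((hfg.mul ih).mono (le_of_eq (by ring))).add
      ((hg.mul (hf.pow N)).mono (le_of_eq (by ring)))

end WeightedOrderGE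

theorem IsWeightedHomogeneous.weightedOrderGE [CommSemiring R] {w : σ → ℕ} {d : ℕ}
    {φ : MvPolynomial σ R} (h : φ.IsWeightedHomogeneous w d) : WeightedOrderGE w d φ :=
  fun _ hu => (h (mem_support_iff.mp hu)).ge

end MvPolynomial

section MonomialIdeals

variable {p n : ℕ} {K : Type*} [Field K]

theorem mem_frobPow_iff {e : ℕ} {h : MvPolynomial (Fin n) K} :
    h ∈ frobPow p n K e ↔ ∀ u ∈ h.support, ∃ i, p ^ e ≤ u i := by
  have hset : (Set.range fun i => (X i : MvPolynomial (Fin n) K) ^ p ^ e)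
      = (fun s => monomial s (1 : K)) '' Set.range fun i => Finsupp.single i (p ^ e) := by
    rw [← Set.range_comp]
    simp [Function.comp_def, X_pow_eq_monomial]
  rw [frobPow, hset, mem_ideal_span_monomial_image]
  simp only [Set.exists_range_iff, Finsupp.single_le_iff]

theorem mem_mIdeal_iff {h : MvPolynomial (Fin n) K} :
    h ∈ mIdeal n K ↔ ∀ u ∈ h.support, u ≠ 0 := by
  rw [mIdeal, ← Set.image_univ, mem_ideal_span_X_image]
  simp only [Set.mem_univ, true_and, ne_eq, Finsupp.ext_iff, not_forall, Finsupp.coe_zero,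
    Pi.zero_apply]

theorem one_notMem_frobPow (hp : p ≠ 0) (e : ℕ) :
    (1 : MvPolynomial (Fin n) K) ∉ frobPow p n K e := by
  simp [mem_frobPow_iff, hp]

theorem mem_frobPow_of_weightedOrderGE {w : Fin n → ℕ} {e : ℕ} {h : MvPolynomial (Fin n) K}
    (hh : WeightedOrderGE w ((p ^ e - 1) * ∑ i, w i + 1) h) : h ∈ frobPow p n K e := by
  refine mem_frobPow_iff.mpr fun u hu => ?_
  by_contra! hsmall
  have : Finsupp.weight w u ≤ (p ^ e - 1) * ∑ i, w i := by
    rw [Finsupp.weight_eq_sum, Finset.mul_sum]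
    exact Finset.sum_le_sum fun i _ => Nat.mul_le_mul_right _ (Nat.le_sub_one_of_lt (hsmall i))
  have := hh u hu
  omega

theorem notMem_frobPow_of_sub {w : Fin n → ℕ} {e m : ℕ} {h h' : MvPolynomial (Fin n) K}
    (hh : h ∉ frobPow p n K e) (hhom : h.IsWeightedHomogeneous w m)
    (hdiff : WeightedOrderGE w (m + 1) (h' - h)) : h' ∉ frobPow p n K e := by
  simp only [mem_frobPow_iff, not_forall, not_exists, not_le] at hh ⊢
  obtain ⟨u, hu, hsmall⟩ := hh
  have hu' : u ∉ (h' - h).support := fun hmem => by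
    have := hdiff u hmem
    rw [hhom (mem_support_iff.mp hu)] at this
    omega
  refine ⟨u, ?_, hsmall⟩
  rw [notMem_support_iff, coeff_sub, sub_eq_zero] at hu'
  rwa [mem_support_iff, hu', ← mem_support_iff]

theorem support_pow_char_pow (hp : p.Prime) [CharP K p] (c : ℕ) (h : MvPolynomial (Fin n) K) :
    (h ^ p ^ c).support = h.support.image (p ^ c • ·) := by
  have := Fact.mk hp
  rw [← map_iterateFrobenius_expand p, support_map_of_injective _ (iterateFrobenius_inj K p c),
    support_expand _ (pow_ne_zero c hp.ne_zero)]

theorem pow_char_pow_mem_frobPow_iff (hp : p.Prime) [CharP K p] {c e : ℕ}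
    {h : MvPolynomial (Fin n) K} :
    h ^ p ^ c ∈ frobPow p n K (e + c) ↔ h ∈ frobPow p n K e := by
  have hpc : 0 < p ^ c := pow_pos hp.pos c
  simp only [mem_frobPow_iff, support_pow_char_pow hp, Finset.forall_mem_image,
    Finsupp.smul_apply, smul_eq_mul, pow_add, mul_comm (p ^ e), Nat.mul_le_mul_left_iff hpc]

end MonomialIdeals

section Nu

variable {p n : ℕ} {K : Type*} [Field K] {h : MvPolynomial (Fin n) K}

theorem nu_eq_of_pow_notMem_of_pow_succ_mem {e N : ℕ} (hN : h ^ N ∉ frobPow p n K e)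
    (hN1 : h ^ (N + 1) ∈ frobPow p n K e) : nu p h e = N := by
  have : {M : ℕ | h ^ M ∉ frobPow p n K e} = Set.Iic N := by
    ext M
    simp only [Set.mem_ofPred_eq, Set.mem_Iic]
    refine ⟨fun hM => ?_, fun hM hmem => hN (Ideal.pow_mem_of_pow_mem _ hmem hM)⟩
    by_contra! hlt
    exact hM (Ideal.pow_mem_of_pow_mem _ hN1 hlt)
  rw [nu, this, csSup_Iic]

theorem bddAbove_pow_notMem_frobPow (hh : h ∈ mIdeal n K) (e : ℕ) :
    BddAbove {N : ℕ | h ^ N ∉ frobPow p n K e} := by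
  refine ⟨(p ^ e - 1) * n, fun N hN => ?_⟩
  by_contra! hlt
  refine hN (mem_frobPow_of_weightedOrderGE (w := fun _ => 1)
    ((WeightedOrderGE.pow (a := 1) ?_ N).mono ?_))
  · intro u hu
    rw [← Finsupp.degree_eq_weight_one, Nat.one_le_iff_ne_zero, Ne, Finsupp.degree_eq_zero_iff]
    exact mem_mIdeal_iff.mp hh u hu
  · simpa using hlt

theorem le_nu (hh : h ∈ mIdeal n K) {e N : ℕ} (hN : h ^ N ∉ frobPow p n K e) :
    N ≤ nu p h e :=
  le_csSup (bddAbove_pow_notMem_frobPow hh e) hN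

theorem pow_nu_notMem_frobPow (hp : p ≠ 0) (hh : h ∈ mIdeal n K) (e : ℕ) :
    h ^ nu p h e ∉ frobPow p n K e :=
  Nat.sSup_mem ⟨0, by simpa using one_notMem_frobPow hp e⟩ (bddAbove_pow_notMem_frobPow hh e)

theorem pow_nu_succ_mem_frobPow (hh : h ∈ mIdeal n K) (e : ℕ) :
    h ^ (nu p h e + 1) ∈ frobPow p n K e := by
  by_contra hN
  exact (le_nu hh hN).not_gt (Nat.lt_succ_self _)

variable [CharP K p]

theorem pow_mul_nu_le_nu_add (hp : p.Prime) (hh : h ∈ mIdeal n K) (e c : ℕ) :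
    p ^ c * nu p h e ≤ nu p h (e + c) := by
  refine le_nu hh fun hmem => pow_nu_notMem_frobPow hp.ne_zero hh e ?_
  rwa [mul_comm, pow_mul, pow_char_pow_mem_frobPow_iff hp] at hmem

theorem nu_add_lt_pow_mul_nu_succ (hp : p.Prime) (hh : h ∈ mIdeal n K) (e c : ℕ) :
    nu p h (e + c) < p ^ c * (nu p h e + 1) := by
  by_contra! hle
  refine pow_nu_notMem_frobPow hp.ne_zero hh (e + c) (Ideal.pow_mem_of_pow_mem _ ?_ hle)
  rw [mul_comm, pow_mul, pow_char_pow_mem_frobPow_iff hp]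
  exact pow_nu_succ_mem_frobPow hh e

theorem nu_mul_pow_le (hp : p.Prime) (hh : h ∈ mIdeal n K) (e E : ℕ) :
    nu p h E * p ^ e ≤ (nu p h e + 1) * p ^ E := by
  rcases le_total E e with hle | hle
  · obtain ⟨c, rfl⟩ := Nat.exists_eq_add_of_le hle
    calc nu p h E * p ^ (E + c) = p ^ c * nu p h E * p ^ E := by ring
      _ ≤ nu p h (E + c) * p ^ E := Nat.mul_le_mul_right _ (pow_mul_nu_le_nu_add hp hh E c)
      _ ≤ (nu p h (E + c) + 1) * p ^ E := Nat.mul_le_mul_right _ (Nat.le_succ _)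
  · obtain ⟨c, rfl⟩ := Nat.exists_eq_add_of_le hle
    calc nu p h (e + c) * p ^ e ≤ p ^ c * (nu p h e + 1) * p ^ e :=
          Nat.mul_le_mul_right _ (nu_add_lt_pow_mul_nu_succ hp hh e c).le
      _ = (nu p h e + 1) * p ^ (e + c) := by ring

theorem fpt_le (hp : p.Prime) (hh : h ∈ mIdeal n K) (e : ℕ) :
    fpt p h ≤ (nu p h e + 1) / (p : ℝ) ^ e := by
  have hp0 : (0 : ℝ) < p := by exact_mod_cast hp.pos
  refine ciSup_le fun E => ?_
  rw [div_le_div_iff₀ (pow_pos hp0 E) (pow_pos hp0 e)]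
  exact_mod_cast nu_mul_pow_le hp hh e E

end Nu

theorem nu_add_eq_nu_of_le {p n : ℕ} {K : Type*} [Field K] (hp : p ≠ 0) {w : Fin n → ℕ}
    {d e : ℕ} {f g : MvPolynomial (Fin n) K} (hf : f.IsWeightedHomogeneous w d)
    (hfm : f ∈ mIdeal n K) (hg : WeightedOrderGE w (d + 1) g)
    (hnu : p ^ e * ∑ i, w i ≤ (nu p f e + 1) * d) :
    nu p (f + g) e = nu p f e := by
  set N := nu p f e
  have hdiff := WeightedOrderGE.add_pow_sub_pow hf.weightedOrderGE hg
  refine nu_eq_of_pow_notMem_of_pow_succ_mem ?_ ?_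
  · refine notMem_frobPow_of_sub (pow_nu_notMem_frobPow hp hfm e) (hf.pow N) ?_
    simpa using hdiff N
  · rw [← sub_add_cancel ((f + g) ^ (N + 1)) (f ^ (N + 1))]
    refine Ideal.add_mem _ (mem_frobPow_of_weightedOrderGE ((hdiff (N + 1)).mono ?_))
      (pow_nu_succ_mem_frobPow hfm e)
    have := Nat.mul_le_mul_right (∑ i, w i) (Nat.sub_le (p ^ e) 1)
    omega

theorem stmt_18_general (p : ℕ) (hp : p.Prime) (n : ℕ) (K : Type*) [Field K] [CharP K p]
    (w : Fin n → ℕ) (hw : ∀ i, 0 < w i) (d : ℕ)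
    (f : MvPolynomial (Fin n) K) (hf0 : f ≠ 0)
    (hfh : f.IsWeightedHomogeneous w d) (hfm : f ∈ mIdeal n K)
    (lam : ℝ) (hlam : lam = (∑ i, (w i : ℝ)) / d)
    (hfpt : fpt p f = lam)
    (g : MvPolynomial (Fin n) K)
    (hg : ∀ u ∈ g.support, d < ∑ i, u i * w i) :
    fpt p (f + g) = fpt p f := by
  have hd : 0 < d := by
    obtain ⟨u, hu⟩ := MvPolynomial.ne_zero_iff.mp hf0
    obtain ⟨i, hi⟩ := Finsupp.ne_iff.mp (mem_mIdeal_iff.mp hfm u (mem_support_iff.mpr hu))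
    rw [← hfh hu]
    exact (hw i).trans_le (Finsupp.le_weight_of_ne_zero' w hi)
  have hgd : WeightedOrderGE w (d + 1) g := fun u hu => by
    simpa [Finsupp.weight_eq_sum] using hg u hu
  have hnu (e : ℕ) : p ^ e * ∑ i, w i ≤ (nu p f e + 1) * d := by
    have := fpt_le hp hfm e
    rw [hfpt, hlam, div_le_div_iff₀ (by exact_mod_cast hd) (pow_pos (by exact_mod_cast hp.pos) e)]
      at this
    exact_mod_cast (by linarith : ((p : ℝ) ^ e * ∑ i, (w i : ℝ)) ≤ (nu p f e + 1) * d)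
  simp only [fpt, nu_add_eq_nu_of_le hp.ne_zero hfh hfm hgd (hnu _)]

/-- if `fpt(f) = λ = (Σ w_i)/d ≤ 1` and every monomial of `g` has degree
`> d`, then `fpt(f+g) = fpt(f)`. -/
theorem stmt_18 (p : ℕ) (hp : p.Prime) (n : ℕ) (K : Type*) [Field K] [CharP K p]
    (w : Fin n → ℕ) (hw : ∀ i, 0 < w i) (d : ℕ)
    (f : MvPolynomial (Fin n) K) (hf0 : f ≠ 0)
    (hfh : f.IsWeightedHomogeneous w d) (hfm : f ∈ mIdeal n K)
    (lam : ℝ) (hlam : lam = (∑ i, (w i : ℝ)) / d) (hlam1 : lam ≤ 1)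
    (hfpt : fpt p f = lam)
    (g : MvPolynomial (Fin n) K)
    (hg : ∀ u ∈ g.support, d < ∑ i, u i * w i) :
    fpt p (f + g) = fpt p f :=
  stmt_18_general p hp n K w hw d f hf0 hfh hfm lam hlam hfpt g hg
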